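/- Trace non-increase under the Q-Soft-Bayes update: let W be Hermitian positive definite with tr(W) ≤ 1, let A be Hermitian positive semi-definite with tr(Aρ) > 0 where ρ = W/tr(W), and let η ∈ (0,1). Define W' = exp(log W + log((1-η)I + η·A/tr(Aρ))). Then tr(W') ≤ tr(W). -/

import Mathlib

/-!
Write `M = (1 - η) I + (η / tr(Aρ)) A`; it is positive definite, so `exp (log M) = M` and
Golden–Thompson gives `tr W' ≤ tr (W M) = (1 - η) tr W + η tr (W A) / tr (A ρ) = tr W`.

Golden–Thompson itself comes from the Lie product formula
`(exp (H / n) exp (K / n)) ^ n → exp (H + K)` along `n = 2 ^ k`, combined with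
`re tr ((A B) ^ 2 ^ k) ≤ re tr (A ^ 2 ^ k B ^ 2 ^ k)` for Hermitian `A`, `B`. The latter is proved
by induction on `k` together with `re tr (X ^ 2 ^ (k + 1)) ≤ re tr ((Xᴴ X) ^ 2 ^ k)`, the only
analytic input being the trace Cauchy–Schwarz inequality `2 re tr (P Q) ≤ tr (Pᴴ P) + tr (Qᴴ Q)`.
-/

open Matrix BigOperators
open scoped ComplexOrder

noncomputable def matFun {D : ℕ} (f : ℝ → ℝ) (A : Matrix (Fin D) (Fin D) ℂ) :
    Matrix (Fin D) (Fin D) ℂ :=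
  if h : A.IsHermitian then
    (h.eigenvectorUnitary : Matrix (Fin D) (Fin D) ℂ) *
      Matrix.diagonal (fun i => (f (h.eigenvalues i) : ℂ)) *
      star (h.eigenvectorUnitary : Matrix (Fin D) (Fin D) ℂ)
  else 0

noncomputable def matLog {D : ℕ} : Matrix (Fin D) (Fin D) ℂ → Matrix (Fin D) (Fin D) ℂ :=
  matFun Real.log

noncomputable def matExp {D : ℕ} : Matrix (Fin D) (Fin D) ℂ → Matrix (Fin D) (Fin D) ℂ :=
  matFun Real.exp

def IsDensity {D : ℕ} (ρ : Matrix (Fin D) (Fin D) ℂ) : Prop :=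
  ρ.PosSemidef ∧ ρ.trace = 1

open NormedSpace Filter Topology

section TraceInequalities

variable {l m 𝕜 : Type*} [Fintype l] [Fintype m] [RCLike 𝕜]

lemma re_trace_conjTranspose_mul_self_nonneg (P : Matrix l m 𝕜) :
    0 ≤ RCLike.re (Pᴴ * P).trace :=
  (RCLike.nonneg_iff.mp (posSemidef_conjTranspose_mul_self P).trace_nonneg).1

/-- Expand `0 ≤ re tr ((Pᴴ - Q)ᴴ (Pᴴ - Q))`. -/
lemma two_mul_re_trace_mul_le (P : Matrix l m 𝕜) (Q : Matrix m l 𝕜) :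
    2 * RCLike.re (P * Q).trace ≤ RCLike.re (Pᴴ * P).trace + RCLike.re (Qᴴ * Q).trace := by
  have hsq := re_trace_conjTranspose_mul_self_nonneg (Pᴴ - Q)
  have hcyc : (P * Pᴴ).trace = (Pᴴ * P).trace := trace_mul_comm _ _
  have hconj : RCLike.re (Qᴴ * Pᴴ).trace = RCLike.re (P * Q).trace := by
    rw [← conjTranspose_mul, trace_conjTranspose, RCLike.star_def, RCLike.conj_re]
  simp only [conjTranspose_sub, conjTranspose_conjTranspose, Matrix.sub_mul, Matrix.mul_sub,
    trace_sub, map_sub, hcyc, hconj] at hsq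
  linarith

variable [DecidableEq m]

lemma trace_mul_pow_comm (P Q : Matrix m m 𝕜) (k : ℕ) :
    ((P * Q) ^ k).trace = ((Q * P) ^ k).trace := by
  cases k with
  | zero => rfl
  | succ k =>
    rw [pow_succ, ← mul_assoc, mul_pow_mul, mul_assoc, trace_mul_comm, mul_assoc, ← pow_succ]

lemma re_trace_pow_mul_pow_le (X : Matrix m m 𝕜) (k : ℕ) :
    RCLike.re ((Xᴴ * X) ^ k * (X * Xᴴ) ^ k).trace ≤ RCLike.re ((Xᴴ * X) ^ (2 * k)).trace := by
  have h := two_mul_re_trace_mul_le ((Xᴴ * X) ^ k) ((X * Xᴴ) ^ k)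
  rw [((isHermitian_conjTranspose_mul_self X).pow k).eq,
    ((isHermitian_mul_conjTranspose_self X).pow k).eq, ← pow_add, ← pow_add,
    trace_mul_pow_comm X Xᴴ] at h
  rw [two_mul]
  linarith

/-- Each inequality at level `k + 1` uses both at level `k`. -/
theorem re_trace_mul_pow_two_pow_le_and_re_trace_pow_two_pow_le (k : ℕ) :
    (∀ A B : Matrix m m 𝕜, A.IsHermitian → B.IsHermitian →
      RCLike.re ((A * B) ^ 2 ^ k).trace ≤ RCLike.re (A ^ 2 ^ k * B ^ 2 ^ k).trace) ∧
    (∀ X : Matrix m m 𝕜,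
      RCLike.re (X ^ 2 ^ (k + 1)).trace ≤ RCLike.re ((Xᴴ * X) ^ 2 ^ k).trace) := by
  induction k with
  | zero =>
    refine ⟨fun A B _ _ => by simp, fun X => ?_⟩
    have h := two_mul_re_trace_mul_le X X
    rw [zero_add, pow_one, sq]
    simp only [pow_zero, pow_one]
    linarith
  | succ k ih =>
    obtain ⟨hmul, hsq⟩ := ih
    refine ⟨fun A B hA hB => ?_, fun X => ?_⟩
    · have hAB : (A * B)ᴴ * (A * B) = B * (A ^ 2 * B) := by
        rw [conjTranspose_mul, hA.eq, hB.eq, sq]; noncomm_ring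
      calc RCLike.re ((A * B) ^ 2 ^ (k + 1)).trace
          ≤ RCLike.re (((A * B)ᴴ * (A * B)) ^ 2 ^ k).trace := hsq (A * B)
        _ = RCLike.re ((A ^ 2 * B ^ 2) ^ 2 ^ k).trace := by
          rw [hAB, trace_mul_pow_comm, mul_assoc, ← sq]
        _ ≤ RCLike.re ((A ^ 2) ^ 2 ^ k * (B ^ 2) ^ 2 ^ k).trace :=
          hmul _ _ (hA.pow 2) (hB.pow 2)
        _ = RCLike.re (A ^ 2 ^ (k + 1) * B ^ 2 ^ (k + 1)).trace := by
          rw [← pow_mul, ← pow_mul, ← pow_succ']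
    · have hX : (X ^ 2)ᴴ * X ^ 2 = Xᴴ * (Xᴴ * X * X) := by
        rw [conjTranspose_pow, sq, sq]; noncomm_ring
      calc RCLike.re (X ^ 2 ^ (k + 1 + 1)).trace
          = RCLike.re ((X ^ 2) ^ 2 ^ (k + 1)).trace := by rw [← pow_mul, ← pow_succ']
        _ ≤ RCLike.re (((X ^ 2)ᴴ * X ^ 2) ^ 2 ^ k).trace := hsq (X ^ 2)
        _ = RCLike.re ((Xᴴ * X * (X * Xᴴ)) ^ 2 ^ k).trace := by
          rw [hX, trace_mul_pow_comm, mul_assoc, mul_assoc]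
        _ ≤ RCLike.re ((Xᴴ * X) ^ 2 ^ k * (X * Xᴴ) ^ 2 ^ k).trace :=
          hmul _ _ (isHermitian_conjTranspose_mul_self X) (isHermitian_mul_conjTranspose_self X)
        _ ≤ RCLike.re ((Xᴴ * X) ^ 2 ^ (k + 1)).trace := by
          rw [pow_succ']; exact re_trace_pow_mul_pow_le X _

theorem re_trace_mul_pow_two_pow_le {A B : Matrix m m 𝕜} (hA : A.IsHermitian)
    (hB : B.IsHermitian) (k : ℕ) :
    RCLike.re ((A * B) ^ 2 ^ k).trace ≤ RCLike.re (A ^ 2 ^ k * B ^ 2 ^ k).trace :=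
  (re_trace_mul_pow_two_pow_le_and_re_trace_pow_two_pow_le k).1 A B hA hB

end TraceInequalities

section LieProductFormula

variable {𝕂 𝔸 : Type*} [RCLike 𝕂] [NormedRing 𝔸] [NormedAlgebra 𝕂 𝔸] [CompleteSpace 𝔸]

lemma exp_inv_natCast_smul_pow {n : ℕ} (hn : n ≠ 0) (X : 𝔸) :
    exp ((n : 𝕂)⁻¹ • X) ^ n = exp X := by
  let _ : NormedAlgebra ℚ 𝔸 := .restrictScalars ℚ 𝕂 𝔸
  rw [← NormedSpace.exp_nsmul, ← Nat.cast_smul_eq_nsmul 𝕂, smul_smul,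
    mul_inv_cancel₀ (Nat.cast_ne_zero.2 hn), one_smul]

/-- Near `1`, `exp (t X) exp (t Y) = exp (L t)` with `L` the local inverse of `exp`, and `L` has
derivative `X + Y` at `0`, so `n L (1 / n) → X + Y` and `(exp (X / n) exp (Y / n)) ^ n =
exp (n L (1 / n)) → exp (X + Y)`. -/
theorem tendsto_exp_smul_mul_exp_smul_pow (X Y : 𝔸) :
    Tendsto (fun n : ℕ => (exp ((n : 𝕂)⁻¹ • X) * exp ((n : 𝕂)⁻¹ • Y)) ^ n) atTop
      (𝓝 (exp (X + Y))) := by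
  let _ : NormedAlgebra ℚ 𝔸 := .restrictScalars ℚ 𝕂 𝔸
  set γ : 𝕂 → 𝔸 := fun t => exp (t • X) * exp (t • Y)
  have hγ : HasDerivAt γ (X + Y) 0 := by
    convert (hasDerivAt_exp_smul_const X (0 : 𝕂)).fun_mul
      (hasDerivAt_exp_smul_const' Y (0 : 𝕂)) using 1
    simp
  have hγ0 : γ 0 = exp 0 := by simp [γ]
  have hexp : HasStrictFDerivAt (exp : 𝔸 → 𝔸)
      ((ContinuousLinearEquiv.refl 𝕂 𝔸 : 𝔸 ≃L[𝕂] 𝔸) : 𝔸 →L[𝕂] 𝔸) 0 :=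
    hasStrictFDerivAt_exp_zero
  set L := hexp.localInverse
  have hlog : HasDerivAt (L ∘ γ) (X + Y) 0 := by
    have hL := hexp.to_localInverse.hasFDerivAt
    rw [← hγ0] at hL
    simpa using hL.comp_hasDerivAt (0 : 𝕂) hγ
  have hlog0 : L (γ 0) = 0 := by rw [hγ0]; exact hexp.localInverse_apply_image
  have hinv : Tendsto (fun n : ℕ => (n : 𝕂)⁻¹) atTop (𝓝[≠] 0) :=
    tendsto_nhdsWithin_iff.2 ⟨tendsto_inv_atTop_nhds_zero_nat,
      (eventually_ne_atTop 0).mono fun n hn => by simpa using hn⟩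
  have hslope : Tendsto (fun n : ℕ => (n : 𝕂) • L (γ (n : 𝕂)⁻¹)) atTop (𝓝 (X + Y)) := by
    simpa [Function.comp_def, hlog0] using
      (hasDerivAt_iff_tendsto_slope_zero.1 hlog).comp hinv
  have hexp_log : ∀ᶠ n : ℕ in atTop, exp (L (γ (n : 𝕂)⁻¹)) = γ (n : 𝕂)⁻¹ := by
    have hγc : Tendsto γ (𝓝 0) (𝓝 (exp 0)) := hγ0 ▸ hγ.continuousAt.tendsto
    exact (hγc.comp (tendsto_nhdsWithin_iff.1 hinv).1).eventually hexp.eventually_right_inverse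
  refine hslope.exp.congr' ?_
  filter_upwards [hexp_log] with n hn
  rw [Nat.cast_smul_eq_nsmul, NormedSpace.exp_nsmul, hn]

end LieProductFormula

open scoped Matrix.Norms.L2Operator in
theorem re_trace_exp_add_le {m 𝕜 : Type*} [Fintype m] [DecidableEq m] [RCLike 𝕜]
    {H K : Matrix m m 𝕜} (hH : H.IsHermitian) (hK : K.IsHermitian) :
    RCLike.re (exp (H + K)).trace ≤ RCLike.re (exp H * exp K).trace := by
  have hherm : ∀ (n : ℕ) {X : Matrix m m 𝕜}, X.IsHermitian →
      (exp ((n : 𝕜)⁻¹ • X)).IsHermitian :=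
    fun n X hX => (hX.smul (IsSelfAdjoint.natCast n).inv₀).exp
  have hlim := ((RCLike.continuous_re.comp continuous_id.matrix_trace).tendsto _).comp
    ((tendsto_exp_smul_mul_exp_smul_pow (𝕂 := 𝕜) H K).comp
      (tendsto_pow_atTop_atTop_of_one_lt one_lt_two))
  refine le_of_tendsto' hlim fun k => ?_
  have hk : 2 ^ k ≠ 0 := by positivity
  calc _ ≤ _ := re_trace_mul_pow_two_pow_le (hherm _ hH) (hherm _ hK) k
    _ = _ := by simp only [exp_inv_natCast_smul_pow hk]

section MatrixFunctions

variable {D : ℕ}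

lemma matFun_eq_cfc (f : ℝ → ℝ) (A : Matrix (Fin D) (Fin D) ℂ) : matFun f A = cfc f A := by
  by_cases hA : A.IsHermitian
  · rw [matFun, dif_pos hA, hA.cfc_eq, IsHermitian.cfc, Unitary.conjStarAlgAut_apply]
    rfl
  · rw [matFun, dif_neg hA]
    exact (cfc_apply_of_not_predicate A hA).symm

lemma isHermitian_matLog (A : Matrix (Fin D) (Fin D) ℂ) : (matLog A).IsHermitian := by
  rw [matLog, matFun_eq_cfc]
  exact cfc_predicate _ _

lemma matExp_eq_exp {H : Matrix (Fin D) (Fin D) ℂ} (hH : H.IsHermitian) : matExp H = exp H := by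
  rw [matExp, matFun_eq_cfc]
  open scoped Matrix.Norms.L2Operator in exact CFC.real_exp_eq_normedSpace_exp hH

lemma matExp_matLog {W : Matrix (Fin D) (Fin D) ℂ} (hW : W.PosDef) : matExp (matLog W) = W := by
  rw [matExp_eq_exp (isHermitian_matLog W), matLog, matFun_eq_cfc]
  open scoped Matrix.Norms.L2Operator MatrixOrder in
    exact CFC.exp_log W hW.isStrictlyPositive

theorem re_trace_matExp_matLog_add_le {W M : Matrix (Fin D) (Fin D) ℂ} (hW : W.PosDef)
    (hM : M.PosDef) : (matExp (matLog W + matLog M)).trace.re ≤ (W * M).trace.re := by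
  have hLW := isHermitian_matLog W
  have hLM := isHermitian_matLog M
  calc (matExp (matLog W + matLog M)).trace.re
      = (exp (matLog W + matLog M)).trace.re := by rw [matExp_eq_exp (hLW.add hLM)]
    _ ≤ (exp (matLog W) * exp (matLog M)).trace.re := re_trace_exp_add_le hLW hLM
    _ = (W * M).trace.re := by
      rw [← matExp_eq_exp hLW, ← matExp_eq_exp hLM, matExp_matLog hW, matExp_matLog hM]

end MatrixFunctions

theorem qsoftbayes_trace_nonincrease_general (D : ℕ) (η : ℝ) (hη0 : 0 < η) (hη1 : η < 1)
    (W A : Matrix (Fin D) (Fin D) ℂ) (hW : W.PosDef)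
    (hA : A.PosSemidef)
    (ρ : Matrix (Fin D) (Fin D) ℂ) (hρ : ρ = (((W.trace).re)⁻¹ : ℂ) • W)
    (hpos : 0 < ((A * ρ).trace).re)
    (W' : Matrix (Fin D) (Fin D) ℂ)
    (hW' : W' = matExp (matLog W +
      matLog ((((1 - η : ℝ)) : ℂ) • 1 + (((η / ((A * ρ).trace).re : ℝ)) : ℂ) • A))) :
    (W'.trace).re ≤ (W.trace).re := by
  set c := ((A * ρ).trace).re
  set M : Matrix (Fin D) (Fin D) ℂ := (((1 - η : ℝ)) : ℂ) • 1 + (((η / c : ℝ)) : ℂ) • A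
  have hM : M.PosDef :=
    (PosDef.one.smul (by exact_mod_cast sub_pos.2 hη1)).add_posSemidef
      (hA.smul (by exact_mod_cast (div_pos hη0 hpos).le))
  have hc : c * (W.trace).re = ((W * A).trace).re := by
    have ht : (W.trace).re ≠ 0 := fun h => by simp [c, hρ, h] at hpos
    simp only [c, hρ, Matrix.mul_smul, trace_smul, smul_eq_mul, ← Complex.ofReal_inv,
      Complex.re_ofReal_mul, trace_mul_comm A W]
    field_simp
  have hWM : ((W * M).trace).re = (W.trace).re := by
    simp only [M, Matrix.mul_add, Matrix.mul_smul, mul_one, trace_add, trace_smul, smul_eq_mul,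
      Complex.add_re, Complex.re_ofReal_mul, ← hc]
    field_simp
    ring
  rw [hW']
  exact (re_trace_matExp_matLog_add_le hW hM).trans_eq hWM

theorem qsoftbayes_trace_nonincrease (D : ℕ) (η : ℝ) (hη0 : 0 < η) (hη1 : η < 1)
    (W A : Matrix (Fin D) (Fin D) ℂ) (hW : W.PosDef) (hWtr : (W.trace).re ≤ 1)
    (hA : A.PosSemidef)
    (ρ : Matrix (Fin D) (Fin D) ℂ) (hρ : ρ = (((W.trace).re)⁻¹ : ℂ) • W)
    (hpos : 0 < ((A * ρ).trace).re)
    (W' : Matrix (Fin D) (Fin D) ℂ)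
    (hW' : W' = matExp (matLog W +
      matLog ((((1 - η : ℝ)) : ℂ) • 1 + (((η / ((A * ρ).trace).re : ℝ)) : ℂ) • A))) :
    (W'.trace).re ≤ (W.trace).re :=
  qsoftbayes_trace_nonincrease_general D η hη0 hη1 W A hW hA ρ hρ hpos W' hW'
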